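/- (Boundedness property under independence.) Suppose μ is a product probability measure, i.e., the coordinates x₁,…,x_p are independent, and Var(f) > 0. Then for every nonempty v ⊆ {1,…,p}, the covariance-based Sobol' index reduces to the variance-based one, S_v = Cov(f_v, f)/Var(f) = Var(f_v)/Var(f), and consequently 0 ≤ S_v ≤ 1. -/

import Mathlib

open MeasureTheory ProbabilityTheory

/-- The sub-σ-algebra generated by the coordinates in `v`. -/
def coordSigma {p : ℕ} (Ω : Fin p → Type*) [∀ i, MeasurableSpace (Ω i)]
    (v : Finset (Fin p)) : MeasurableSpace (∀ i, Ω i) :=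
  ⨆ i ∈ v, MeasurableSpace.comap (fun x : ∀ j, Ω j => x i) inferInstance

/-- The recursively defined (generalized ANOVA) components `f_v`. -/
noncomputable def anovaComp {p : ℕ} {Ω : Fin p → Type*} [∀ i, MeasurableSpace (Ω i)]
    (μ : Measure (∀ i, Ω i)) (f : (∀ i, Ω i) → ℝ) : Finset (Fin p) → (∀ i, Ω i) → ℝ
  | v =>
    if v = ∅ then fun _ => ∫ x, f x ∂μ
    else μ[f | coordSigma Ω v] - ∑ w ∈ v.ssubsets.attach, anovaComp μ f w.1
  termination_by v => v.card
  decreasing_by exact Finset.card_lt_card (Finset.mem_ssubsets.mp w.2)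

/-- Variance (`‖f - f₀‖₂²`). -/
noncomputable def fVar {α : Type*} [MeasurableSpace α] (μ : Measure α) (f : α → ℝ) : ℝ :=
  ∫ x, (f x - ∫ y, f y ∂μ) ^ 2 ∂μ

/-- Covariance. -/
noncomputable def fCov {α : Type*} [MeasurableSpace α] (μ : Measure α) (g f : α → ℝ) : ℝ :=
  ∫ x, (g x - ∫ y, g y ∂μ) * (f x - ∫ y, f y ∂μ) ∂μ

/-- Sobol' index `S_v`. -/
noncomputable def sobolIndex {p : ℕ} {Ω : Fin p → Type*} [∀ i, MeasurableSpace (Ω i)]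
    (μ : Measure (∀ i, Ω i)) (f : (∀ i, Ω i) → ℝ) (v : Finset (Fin p)) : ℝ :=
  fCov μ (anovaComp μ f v) f / fVar μ f

/-- Total Sobol' index `T_u`. -/
noncomputable def totalSobolIndex {p : ℕ} {Ω : Fin p → Type*} [∀ i, MeasurableSpace (Ω i)]
    (μ : Measure (∀ i, Ω i)) (f : (∀ i, Ω i) → ℝ) (u : Finset (Fin p)) : ℝ :=
  ∑ v ∈ Finset.univ.powerset.filter (fun v => (v ∩ u).Nonempty), sobolIndex μ f v

/-!
Under a product measure, coordinate σ-algebras of disjoint index sets are independent, so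
conditioning a `σ(x_v)`-measurable function on `σ(x_w)` is the same as conditioning it on
`σ(x_{v ∩ w})`. By induction on `v` this gives `E[f_v | σ(x_w)] = 0` whenever `v ⊄ w`, so distinct
components are uncorrelated and
`Cov(f_v, f) = Cov(f_v, E[f | σ(x_v)]) = ∑_{w ⊆ v} Cov(f_v, f_w) = Var(f_v)`.
The bound `S_v ≤ 1` then follows from `0 ≤ Var(f - f_v) = Var(f) - Var(f_v)`.
-/

theorem fVar_eq_variance {α : Type*} [MeasurableSpace α] {μ : Measure α} {f : α → ℝ}
    (hf : AEMeasurable f μ) : fVar μ f = Var[f; μ] :=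
  (variance_eq_integral hf).symm

theorem fCov_eq_covariance {α : Type*} [MeasurableSpace α] (μ : Measure α) (g f : α → ℝ) :
    fCov μ g f = cov[g, f; μ] :=
  rfl

namespace MeasureTheory

variable {Ω E : Type*} [NormedAddCommGroup E] [NormedSpace ℝ E]
  {m m₀ : MeasurableSpace Ω} {μ : Measure Ω}

theorem setIntegral_eq_of_isPiSystem {P : Set (Set Ω)} (hm : m ≤ m₀)
    (hgen : m = MeasurableSpace.generateFrom P) (hP : IsPiSystem P) {f g : Ω → E}
    (hf : Integrable f μ) (hg : Integrable g μ) (hfg : ∫ x, f x ∂μ = ∫ x, g x ∂μ)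
    (hPfg : ∀ s ∈ P, ∫ x in s, f x ∂μ = ∫ x in s, g x ∂μ) {s : Set Ω}
    (hs : MeasurableSet[m] s) : ∫ x in s, f x ∂μ = ∫ x in s, g x ∂μ := by
  induction s, hs using MeasurableSpace.induction_on_inter hgen hP with
  | empty => simp
  | basic s hs => exact hPfg s hs
  | compl s hs ih =>
    have hf' := integral_add_compl (hm s hs) hf
    rw [ih, hfg, ← integral_add_compl (hm s hs) hg] at hf'
    exact add_left_cancel hf'
  | iUnion s hdisj hs ih =>
    have hs' i := hm _ (hs i)
    rw [integral_iUnion hs' hdisj hf.integrableOn, integral_iUnion hs' hdisj hg.integrableOn]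
    exact tsum_congr ih

theorem setIntegral_inter_eq_smul_of_indep [CompleteSpace E] [IsFiniteMeasure μ]
    {m₁ m₂ : MeasurableSpace Ω} (hm₁ : m₁ ≤ m₀) (hm₂ : m₂ ≤ m₀) (hind : Indep m₁ m₂ μ) {g : Ω → E}
    (hg : StronglyMeasurable[m₁] g) (hgi : Integrable g μ) {s t : Set Ω}
    (hs : MeasurableSet[m₁] s) (ht : MeasurableSet[m₂] t) :
    ∫ x in s ∩ t, g x ∂μ = μ.real t • ∫ x in s, g x ∂μ := by
  calc ∫ x in s ∩ t, g x ∂μ = ∫ x in t, s.indicator g x ∂μ := by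
        rw [setIntegral_indicator (hm₁ s hs), Set.inter_comm]
    _ = ∫ x in t, μ[s.indicator g | m₂] x ∂μ :=
        (setIntegral_condExp hm₂ (hgi.indicator (hm₁ s hs)) ht).symm
    _ = ∫ x in t, (∫ y, s.indicator g y ∂μ) ∂μ :=
        setIntegral_congr_ae (hm₂ t ht) ((condExp_indep_eq hm₁ hm₂
          (hg.indicator hs) hind).mono fun x hx _ => hx)
    _ = μ.real t • ∫ x in s, g x ∂μ := by
        rw [setIntegral_const, integral_indicator (hm₁ s hs)]

theorem condExp_sup_indep_eq [CompleteSpace E] [IsFiniteMeasure μ]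
    {m₁ m₂ m' : MeasurableSpace Ω} (h₁ : m₁ ≤ m') (hm' : m' ≤ m₀) (hm₂ : m₂ ≤ m₀)
    (hind : Indep m' m₂ μ) {g : Ω → E} (hg : StronglyMeasurable[m'] g) (hgi : Integrable g μ) :
    μ[g | m₁ ⊔ m₂] =ᵐ[μ] μ[g | m₁] := by
  set P : Set (Set Ω) :=
    {u | ∃ s t, MeasurableSet[m₁] s ∧ MeasurableSet[m₂] t ∧ s ∩ t = u}
  have hgen : m₁ ⊔ m₂ = MeasurableSpace.generateFrom P := by
    refine le_antisymm (sup_le (fun s hs => ?_) (fun t ht => ?_))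
      (MeasurableSpace.generateFrom_le ?_)
    · exact MeasurableSpace.measurableSet_generateFrom ⟨s, _, hs, .univ, Set.inter_univ s⟩
    · exact MeasurableSpace.measurableSet_generateFrom ⟨_, t, .univ, ht, Set.univ_inter t⟩
    · rintro _ ⟨s, t, hs, ht, rfl⟩
      exact (le_sup_left (b := m₂) s hs).inter (le_sup_right (a := m₁) t ht)
  have hP : IsPiSystem P := by
    rintro _ ⟨s₁, t₁, hs₁, ht₁, rfl⟩ _ ⟨s₂, t₂, hs₂, ht₂, rfl⟩ _
    exact ⟨s₁ ∩ s₂, t₁ ∩ t₂, hs₁.inter hs₂, ht₁.inter ht₂, Set.inter_inter_inter_comm ..⟩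
  have hm₁ : m₁ ≤ m₀ := h₁.trans hm'
  refine (ae_eq_condExp_of_forall_setIntegral_eq (sup_le hm₁ hm₂) hgi
    (fun _ _ _ => integrable_condExp.integrableOn) (fun u hu _ => ?_)
    (stronglyMeasurable_condExp.mono (le_sup_left : m₁ ≤ m₁ ⊔ m₂)).aestronglyMeasurable).symm
  refine setIntegral_eq_of_isPiSystem (sup_le hm₁ hm₂) hgen hP integrable_condExp hgi
    (integral_condExp hm₁) ?_ hu
  rintro _ ⟨s, t, hs, ht, rfl⟩
  rw [setIntegral_inter_eq_smul_of_indep hm' hm₂ hind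
      (stronglyMeasurable_condExp.mono h₁) integrable_condExp (h₁ s hs) ht,
    setIntegral_inter_eq_smul_of_indep hm' hm₂ hind hg hgi (h₁ s hs) ht,
    setIntegral_condExp hm₁ hgi hs]

end MeasureTheory

namespace ProbabilityTheory

variable {Ω : Type*} {m m₀ : MeasurableSpace Ω} {μ : Measure Ω} [IsProbabilityMeasure μ]
  {X Y : Ω → ℝ}

theorem covariance_eq_zero_of_condExp_eq_zero (hm : m ≤ m₀) (hX : MemLp X 2 μ)
    (hY : MemLp Y 2 μ) (hYm : StronglyMeasurable[m] Y) (hXm : μ[X | m] =ᵐ[μ] 0) :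
    cov[X, Y; μ] = 0 := by
  have hmean : μ[X] = 0 := by
    rw [← integral_condExp hm, integral_congr_ae hXm]; simp
  have hXYm : μ[X * Y | m] =ᵐ[μ] 0 := by
    filter_upwards [condExp_mul_of_stronglyMeasurable_right hYm (hX.integrable_mul hY)
      (hX.integrable one_le_two), hXm] with x hXYx hXx
    simp [hXYx, hXx]
  have hmul : μ[X * Y] = 0 := by
    rw [← integral_condExp hm, integral_congr_ae hXYm]; simp
  rw [covariance_eq_sub hX hY, hmul, hmean, zero_mul, sub_zero]

theorem covariance_condExp_right (hm : m ≤ m₀) (hX : MemLp X 2 μ) (hY : MemLp Y 2 μ)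
    (hYm : StronglyMeasurable[m] Y) : cov[Y, μ[X | m]; μ] = cov[Y, X; μ] := by
  have hXc : MemLp (μ[X | m]) 2 μ := hX.condExp one_le_two
  have hres : μ[X - μ[X | m] | m] =ᵐ[μ] 0 := by
    filter_upwards [condExp_sub (hX.integrable one_le_two) integrable_condExp m] with x hx
    rw [hx, Pi.sub_apply, condExp_of_stronglyMeasurable hm stronglyMeasurable_condExp
      integrable_condExp, sub_self, Pi.zero_apply]
  have horth : cov[Y, X - μ[X | m]; μ] = 0 := by
    rw [covariance_comm]
    exact covariance_eq_zero_of_condExp_eq_zero hm (hX.sub hXc) hY hYm hres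
  rw [covariance_sub_right hY hX hXc, sub_eq_zero] at horth
  exact horth.symm

end ProbabilityTheory

section coordSigma

variable {p : ℕ} {Ω : Fin p → Type*} [∀ i, MeasurableSpace (Ω i)]

theorem coordSigma_le (v : Finset (Fin p)) : coordSigma Ω v ≤ MeasurableSpace.pi :=
  iSup₂_le fun i _ => (measurable_pi_apply i).comap_le

theorem coordSigma_mono {u v : Finset (Fin p)} (h : u ⊆ v) :
    coordSigma Ω u ≤ coordSigma Ω v :=
  biSup_mono fun _ hi => h hi

theorem coordSigma_empty : coordSigma Ω ∅ = ⊥ := by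
  simp [coordSigma]

theorem coordSigma_union (u v : Finset (Fin p)) :
    coordSigma Ω (u ∪ v) = coordSigma Ω u ⊔ coordSigma Ω v := by
  simp only [coordSigma, Finset.mem_union, iSup_or, iSup_sup_eq]

theorem indep_coordSigma_of_disjoint (ν : ∀ i, Measure (Ω i))
    [∀ i, IsProbabilityMeasure (ν i)] {u v : Finset (Fin p)} (huv : Disjoint u v) :
    Indep (coordSigma Ω u) (coordSigma Ω v) (Measure.pi ν) :=
  indep_iSup_of_disjoint (fun i => (measurable_pi_apply i).comap_le)
    (iIndepFun_pi (X := fun _ => id) fun _ => aemeasurable_id).iIndep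
    (Finset.disjoint_coe.mpr huv)

theorem condExp_coordSigma_ae_eq_inter (ν : ∀ i, Measure (Ω i))
    [∀ i, IsProbabilityMeasure (ν i)] {v w : Finset (Fin p)} {g : (∀ i, Ω i) → ℝ}
    (hg : StronglyMeasurable[coordSigma Ω v] g) (hgi : Integrable g (Measure.pi ν)) :
    (Measure.pi ν)[g | coordSigma Ω w] =ᵐ[Measure.pi ν]
      (Measure.pi ν)[g | coordSigma Ω (v ∩ w)] := by
  have hw : coordSigma Ω w = coordSigma Ω (v ∩ w) ⊔ coordSigma Ω (w \ v) := by
    rw [← coordSigma_union, Finset.union_comm, Finset.inter_comm, Finset.sdiff_union_inter]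
  rw [hw]
  exact condExp_sup_indep_eq (coordSigma_mono Finset.inter_subset_left) (coordSigma_le v)
    (coordSigma_le _) (indep_coordSigma_of_disjoint ν Finset.disjoint_sdiff) hg hgi

end coordSigma

theorem Finset.sum_ssubsets_ite_subset {α M : Type*} [DecidableEq α] [AddCommMonoid M]
    {v w : Finset α} (hvw : ¬ v ⊆ w) (g : Finset α → M) :
    ∑ u ∈ v.ssubsets, (if u ⊆ w then g u else 0) = ∑ u ∈ (v ∩ w).powerset, g u := by
  rw [← Finset.sum_filter]
  congr 1
  ext u
  simp only [Finset.mem_filter, Finset.mem_ssubsets, Finset.mem_powerset,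
    Finset.subset_inter_iff, Finset.ssubset_iff_subset_ne]
  exact ⟨fun ⟨⟨huv, _⟩, huw⟩ => ⟨huv, huw⟩,
    fun ⟨huv, huw⟩ => ⟨⟨huv, fun h => hvw (h ▸ huw)⟩, huw⟩⟩

section anovaComp

variable {p : ℕ} {Ω : Fin p → Type*} [∀ i, MeasurableSpace (Ω i)]
  (μ : Measure (∀ i, Ω i)) (f : (∀ i, Ω i) → ℝ)

theorem anovaComp_empty : anovaComp μ f ∅ = fun _ => ∫ x, f x ∂μ := by
  rw [anovaComp, if_pos rfl]

theorem anovaComp_of_ne_empty {v : Finset (Fin p)} (hv : v ≠ ∅) :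
    anovaComp μ f v = μ[f | coordSigma Ω v] - ∑ w ∈ v.ssubsets, anovaComp μ f w := by
  rw [anovaComp, if_neg hv, Finset.sum_attach v.ssubsets (anovaComp μ f)]

theorem sum_powerset_anovaComp {v : Finset (Fin p)} (hv : v ≠ ∅) :
    ∑ w ∈ v.powerset, anovaComp μ f w = μ[f | coordSigma Ω v] := by
  rw [← Finset.sum_erase_add _ _ (Finset.mem_powerset_self v), anovaComp_of_ne_empty μ f hv]
  exact add_sub_cancel (∑ w ∈ v.ssubsets, anovaComp μ f w) _

theorem condExp_coordSigma_ae_eq_sum_anovaComp [IsProbabilityMeasure μ]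
    (v : Finset (Fin p)) :
    μ[f | coordSigma Ω v] =ᵐ[μ] ∑ w ∈ v.powerset, anovaComp μ f w := by
  rcases eq_or_ne v ∅ with rfl | hv
  · rw [Finset.powerset_empty, Finset.sum_singleton, anovaComp_empty, coordSigma_empty,
      condExp_bot]
  · rw [sum_powerset_anovaComp μ f hv]

theorem stronglyMeasurable_anovaComp (v : Finset (Fin p)) :
    StronglyMeasurable[coordSigma Ω v] (anovaComp μ f v) := by
  induction v using Finset.strongInduction with
  | H v ih =>
    rcases eq_or_ne v ∅ with rfl | hv
    · rw [anovaComp_empty]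
      exact stronglyMeasurable_const
    · rw [anovaComp_of_ne_empty μ f hv]
      refine stronglyMeasurable_condExp.sub (Finset.stronglyMeasurable_sum _ fun w hw => ?_)
      have hwv := Finset.mem_ssubsets.mp hw
      exact (ih w hwv).mono (coordSigma_mono hwv.subset)

theorem memLp_anovaComp [IsFiniteMeasure μ] (hf : MemLp f 2 μ)
    (v : Finset (Fin p)) : MemLp (anovaComp μ f v) 2 μ := by
  induction v using Finset.strongInduction with
  | H v ih =>
    rcases eq_or_ne v ∅ with rfl | hv
    · rw [anovaComp_empty]
      exact memLp_const _
    · rw [anovaComp_of_ne_empty μ f hv]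
      exact (hf.condExp one_le_two).sub
        (memLp_finsetSum' _ fun w hw => ih w (Finset.mem_ssubsets.mp hw))

end anovaComp

section product

variable {p : ℕ} {Ω : Fin p → Type*} [∀ i, MeasurableSpace (Ω i)]
  (ν : ∀ i, Measure (Ω i)) [∀ i, IsProbabilityMeasure (ν i)]
  {f : (∀ i, Ω i) → ℝ}

theorem condExp_anovaComp_coordSigma (hf : MemLp f 2 (Measure.pi ν)) (v w : Finset (Fin p)) :
    (Measure.pi ν)[anovaComp (Measure.pi ν) f v | coordSigma Ω w] =ᵐ[Measure.pi ν]
      if v ⊆ w then anovaComp (Measure.pi ν) f v else 0 := by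
  set μ := Measure.pi ν
  have hint u : Integrable (anovaComp μ f u) μ := (memLp_anovaComp μ f hf u).integrable one_le_two
  induction v using Finset.strongInduction with
  | H v ih =>
    by_cases hvw : v ⊆ w
    · rw [if_pos hvw, condExp_of_stronglyMeasurable (coordSigma_le w)
        ((stronglyMeasurable_anovaComp μ f v).mono (coordSigma_mono hvw)) (hint v)]
    rw [if_neg hvw]
    have hv : v ≠ ∅ := by
      rintro rfl
      exact hvw (Finset.empty_subset w)
    have hcond : μ[μ[f | coordSigma Ω v] | coordSigma Ω w] =ᵐ[μ]
        ∑ u ∈ (v ∩ w).powerset, anovaComp μ f u :=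
      (condExp_coordSigma_ae_eq_inter ν stronglyMeasurable_condExp integrable_condExp).trans
        ((condExp_condExp_of_le (coordSigma_mono Finset.inter_subset_left)
          (coordSigma_le v)).trans (condExp_coordSigma_ae_eq_sum_anovaComp μ f _))
    have hlower : ∀ᵐ x ∂μ, ∀ u ∈ v.ssubsets, μ[anovaComp μ f u | coordSigma Ω w] x =
        (if u ⊆ w then anovaComp μ f u else 0) x :=
      (Filter.eventually_all_finset _).mpr fun u hu => ih u (Finset.mem_ssubsets.mp hu)
    -- Both terms of `f_v = E[f | σ(x_v)] - ∑_{u ⊊ v} f_u` condition down to `∑_{u ⊆ v ∩ w} f_u`.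
    rw [anovaComp_of_ne_empty μ f hv]
    filter_upwards
      [condExp_sub integrable_condExp (integrable_finsetSum' _ fun u _ => hint u) _,
      condExp_finsetSum (fun u _ => hint u) _, hcond, hlower] with x hsubx hsumx hcondx hlowerx
    rw [hsubx, Pi.sub_apply, hsumx, hcondx, Finset.sum_apply, Finset.sum_apply,
      Finset.sum_congr rfl hlowerx]
    simp only [apply_ite (fun g : (∀ i, Ω i) → ℝ => g x), Pi.zero_apply]
    rw [Finset.sum_ssubsets_ite_subset hvw, sub_self]

theorem covariance_anovaComp_eq_zero (hf : MemLp f 2 (Measure.pi ν)) {v w : Finset (Fin p)}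
    (hvw : ¬ v ⊆ w) :
    cov[anovaComp (Measure.pi ν) f v, anovaComp (Measure.pi ν) f w; Measure.pi ν] = 0 := by
  refine covariance_eq_zero_of_condExp_eq_zero (coordSigma_le w) (memLp_anovaComp _ f hf v)
    (memLp_anovaComp _ f hf w) (stronglyMeasurable_anovaComp _ f w) ?_
  simpa only [if_neg hvw] using condExp_anovaComp_coordSigma ν hf v w

theorem covariance_anovaComp_eq_variance (hf : MemLp f 2 (Measure.pi ν)) {v : Finset (Fin p)}
    (hv : v ≠ ∅) :
    cov[anovaComp (Measure.pi ν) f v, f; Measure.pi ν] =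
      Var[anovaComp (Measure.pi ν) f v; Measure.pi ν] := by
  set μ := Measure.pi ν
  have hfv := memLp_anovaComp μ f hf v
  calc cov[anovaComp μ f v, f; μ] = cov[anovaComp μ f v, μ[f | coordSigma Ω v]; μ] :=
        (covariance_condExp_right (coordSigma_le v) hf hfv
          (stronglyMeasurable_anovaComp μ f v)).symm
    _ = ∑ w ∈ v.powerset, cov[anovaComp μ f v, anovaComp μ f w; μ] := by
        rw [← sum_powerset_anovaComp μ f hv,
          covariance_sum_right' (fun w _ => memLp_anovaComp μ f hf w) hfv]
    _ = cov[anovaComp μ f v, anovaComp μ f v; μ] :=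
        Finset.sum_eq_single_of_mem v (Finset.mem_powerset_self v) fun w hw hwv =>
          covariance_anovaComp_eq_zero ν hf fun hvw =>
            hwv (Finset.Subset.antisymm (Finset.mem_powerset.mp hw) hvw)
    _ = Var[anovaComp μ f v; μ] := covariance_self hfv.aemeasurable

end product

theorem sobolIndex_eq_var_ratio_and_bounded_of_indep_general
    {p : ℕ} (Ω : Fin p → Type*) [∀ i, MeasurableSpace (Ω i)]
    (ν : ∀ i, Measure (Ω i)) [∀ i, IsProbabilityMeasure (ν i)]
    (μ : Measure (∀ i, Ω i)) (hμ : μ = Measure.pi ν)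
    (f : (∀ i, Ω i) → ℝ) (hf : MemLp f 2 μ) (hvar : 0 < fVar μ f)
    (v : Finset (Fin p)) (hv : v.Nonempty) :
    sobolIndex μ f v = fVar μ (anovaComp μ f v) / fVar μ f ∧
    0 ≤ sobolIndex μ f v ∧ sobolIndex μ f v ≤ 1 := by
  subst hμ
  have hfv := memLp_anovaComp _ f hf v
  have hcov := covariance_anovaComp_eq_variance ν hf hv.ne_empty
  have hle : Var[anovaComp (Measure.pi ν) f v; Measure.pi ν] ≤ Var[f; Measure.pi ν] := by
    have hres := variance_nonneg (f - anovaComp (Measure.pi ν) f v) (Measure.pi ν)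
    rw [variance_sub hf hfv, covariance_comm, hcov] at hres
    linarith
  rw [fVar_eq_variance hf.aemeasurable] at hvar
  rw [sobolIndex, fCov_eq_covariance, hcov, fVar_eq_variance hfv.aemeasurable,
    fVar_eq_variance hf.aemeasurable]
  exact ⟨rfl, div_nonneg (variance_nonneg _ _) hvar.le, (div_le_one hvar).mpr hle⟩

/-- Boundedness property under independence: if `μ` is a product measure and `Var(f) > 0`,
then for every nonempty `v`, `S_v = Cov(f_v,f)/Var(f) = Var(f_v)/Var(f)`, and
consequently `0 ≤ S_v ≤ 1`. -/
theorem sobolIndex_eq_var_ratio_and_bounded_of_indep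
    {p : ℕ} (hp : 1 ≤ p) (Ω : Fin p → Type*) [∀ i, MeasurableSpace (Ω i)]
    (ν : ∀ i, Measure (Ω i)) [∀ i, IsProbabilityMeasure (ν i)]
    (μ : Measure (∀ i, Ω i)) [IsProbabilityMeasure μ] (hμ : μ = Measure.pi ν)
    (f : (∀ i, Ω i) → ℝ) (hf : MemLp f 2 μ) (hvar : 0 < fVar μ f)
    (v : Finset (Fin p)) (hv : v.Nonempty) :
    sobolIndex μ f v = fVar μ (anovaComp μ f v) / fVar μ f ∧
    0 ≤ sobolIndex μ f v ∧ sobolIndex μ f v ≤ 1 :=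
  sobolIndex_eq_var_ratio_and_bounded_of_indep_general Ω ν μ hμ f hf hvar v hv
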